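/- arXiv:2003.05999 — 3 statements merged into one kernel-verified Lean document; each statement's English description precedes it below -/
import Mathlib

section
/- For any sequence of real numbers z_1, …, z_n with 0 ≤ z_k ≤ Z_{k-1}, where Z_{k-1} := max{1, z_1 + … + z_{k-1}}, it holds that ∑_{k=1}^n z_k / √(Z_{k-1}) ≤ (√2 + 1) √(Z_n). -/
private lemma doubling_trick_aux (z : ℕ → ℝ) (n : ℕ)
    (h : ∀ k, 1 ≤ k → k ≤ n →
      0 ≤ z k ∧ z k ≤ max 1 (∑ i ∈ Finset.Icc 1 (k - 1), z i)) :
    ∑ k ∈ Finset.Icc 1 n, z k / Real.sqrt (max 1 (∑ i ∈ Finset.Icc 1 (k - 1), z i))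
      + (max 1 (∑ i ∈ Finset.Icc 1 n, z i) - ∑ i ∈ Finset.Icc 1 n, z i)
      ≤ (Real.sqrt 2 + 1) * Real.sqrt (max 1 (∑ i ∈ Finset.Icc 1 n, z i)) := by
  induction n with
  | zero =>
    simp
  | succ n ih =>
    have hz := h (n + 1) (by omega) le_rfl
    have IH := ih (fun k hk1 hk2 => h k hk1 (by omega))
    have hS'0 : 0 ≤ ∑ i ∈ Finset.Icc 1 n, z i :=
      Finset.sum_nonneg fun i hi => (h i (Finset.mem_Icc.mp hi).1 (by
        have := (Finset.mem_Icc.mp hi).2; omega)).1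
    rw [Finset.sum_Icc_succ_top (by omega : 1 ≤ n + 1),
        Finset.sum_Icc_succ_top (by omega : 1 ≤ n + 1)]
    simp only [Nat.add_sub_cancel] at *
    set S' : ℝ := ∑ i ∈ Finset.Icc 1 n, z i with hS'
    set a : ℝ := Real.sqrt (max 1 S') with ha
    set b : ℝ := Real.sqrt (max 1 (S' + z (n + 1))) with hb
    have hz0 : 0 ≤ z (n + 1) := hz.1
    have ha0 : 0 ≤ a := Real.sqrt_nonneg _
    have hb0 : 0 ≤ b := Real.sqrt_nonneg _
    have ha2 : a ^ 2 = max 1 S' := Real.sq_sqrt (le_trans zero_le_one (le_max_left _ _))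
    have hb2 : b ^ 2 = max 1 (S' + z (n + 1)) :=
      Real.sq_sqrt (le_trans zero_le_one (le_max_left _ _))
    have ha1 : 1 ≤ a := by
      have h1 : Real.sqrt 1 ≤ Real.sqrt (max 1 S') := Real.sqrt_le_sqrt (le_max_left _ _)
      rwa [Real.sqrt_one] at h1
    have hab : a ≤ b := by
      apply Real.sqrt_le_sqrt
      exact max_le_max le_rfl (by linarith)
    have hzle : z (n + 1) ≤ a ^ 2 := by rw [ha2]; exact hz.2
    have hbZ : b ^ 2 ≤ a ^ 2 + z (n + 1) := by
      rw [ha2, hb2]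
      apply max_le
      · have := le_max_left 1 S'; linarith
      · have := le_max_right 1 S'; linarith
    -- key step inequality
    have key : z (n + 1) / a + (b ^ 2 - (S' + z (n + 1))) - (a ^ 2 - S')
        ≤ (Real.sqrt 2 + 1) * (b - a) := by
      have hs2 : Real.sqrt 2 ^ 2 = 2 := Real.sq_sqrt (by norm_num)
      have hs2n : 0 ≤ Real.sqrt 2 := Real.sqrt_nonneg 2
      rcases le_or_gt S' 1 with hle | hlt
      · have hav : a = 1 := by
          have : a ^ 2 = 1 := by rw [ha2, max_eq_left hle]
          nlinarith
        have hble : b ≤ Real.sqrt 2 := by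
          have h1 : b ^ 2 ≤ Real.sqrt 2 ^ 2 := by nlinarith
          calc b = Real.sqrt (b ^ 2) := (Real.sqrt_sq hb0).symm
            _ ≤ Real.sqrt (Real.sqrt 2 ^ 2) := Real.sqrt_le_sqrt h1
            _ = Real.sqrt 2 := Real.sqrt_sq hs2n
        rw [hav]
        have hb1 : 1 ≤ b := le_trans ha1 (hav ▸ hab)
        have : (b - 1) * (Real.sqrt 2 - b) ≥ 0 :=
          mul_nonneg (by linarith) (by linarith)
        nlinarith
      · have haS : a ^ 2 = S' := by rw [ha2, max_eq_right hlt.le]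
        have hbS : b ^ 2 = S' + z (n + 1) := by
          rw [hb2, max_eq_right]; linarith
        have hapos : 0 < a := lt_of_lt_of_le one_pos ha1
        have hba : b ≤ Real.sqrt 2 * a := by
          have h1 : b ^ 2 ≤ (Real.sqrt 2 * a) ^ 2 := by nlinarith
          calc b = Real.sqrt (b ^ 2) := (Real.sqrt_sq hb0).symm
            _ ≤ Real.sqrt ((Real.sqrt 2 * a) ^ 2) := Real.sqrt_le_sqrt h1
            _ = Real.sqrt 2 * a := Real.sqrt_sq (by positivity)
        have hdiv : z (n + 1) / a ≤ (Real.sqrt 2 + 1) * (b - a) := by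
          rw [div_le_iff₀ hapos]
          have hzeq : z (n + 1) = (b - a) * (b + a) := by nlinarith
          nlinarith [mul_nonneg (sub_nonneg.mpr hab) (by linarith : (0:ℝ) ≤ (Real.sqrt 2 + 1) * a - (b + a))]
        linarith [hbS, haS]
    linarith [IH, key]

/-- Doubling trick lemma: for `z_1, …, z_n` with `0 ≤ z_k ≤ Z_{k-1}` where
`Z_j := max 1 (z_1 + ⋯ + z_j)`, we have
`∑_{k=1}^n z_k / √(Z_{k-1}) ≤ (√2 + 1) √(Z_n)`. -/
theorem doubling_trick (n : ℕ) (z : ℕ → ℝ)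
    (h : ∀ k, 1 ≤ k → k ≤ n →
      0 ≤ z k ∧ z k ≤ max 1 (∑ i ∈ Finset.Icc 1 (k - 1), z i)) :
    ∑ k ∈ Finset.Icc 1 n, z k / Real.sqrt (max 1 (∑ i ∈ Finset.Icc 1 (k - 1), z i)) ≤
      (Real.sqrt 2 + 1) * Real.sqrt (max 1 (∑ i ∈ Finset.Icc 1 n, z i)) := by
  have := doubling_trick_aux z n h
  have hmax := le_max_right 1 (∑ i ∈ Finset.Icc 1 n, z i)
  linarith
end

section
/- Let Y = Φ Mᵀ + E + N where Y ∈ ℝ^{N×m}, Φ ∈ ℝ^{N×d}, M ∈ ℝ^{m×d}, and let M̂ᵀ = (ΦᵀΦ + λI)^{-1} Φᵀ Y be the ridge regression solution with λ > 0. Then √(Tr((M̂ − M) V (M̂ − M)ᵀ)) ≤ √(Tr(EᵀΦ V^{-1} Φᵀ E)) + √(Tr(NᵀΦ V^{-1} Φᵀ N)) + √λ ‖M‖_F, where V = ΦᵀΦ + λI. -/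
/-!
With `V = ΦᵀΦ + λI`, the model gives `(M̂ - M)ᵀ = V⁻¹(ΦᵀE + ΦᵀN - λMᵀ)`, so the left-hand side is
the `V⁻¹`-weighted Frobenius norm `√Tr(Cᵀ V⁻¹ C)` of `C = ΦᵀE + ΦᵀN - λMᵀ`. Writing `V⁻¹ = BᵀB`,
this is the Frobenius norm of `BC`, hence satisfies the triangle inequality, which splits off the
noise and bias terms. The regularization term is bounded using `λV⁻¹ ≤ I` in the Loewner order.
-/

open Matrix

noncomputable def frob {m n : ℕ} (A : Matrix (Fin m) (Fin n) ℝ) : ℝ :=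
  Real.sqrt (∑ i, ∑ j, A i j ^ 2)

open scoped MatrixOrder Matrix.Norms.Frobenius

namespace Matrix

variable {ι n p : Type*}

theorem PosSemidef.posDef_add_smul_one [DecidableEq n] {A : Matrix n n ℝ} (hA : A.PosSemidef)
    {lam : ℝ} (hlam : 0 < lam) : (A + lam • 1).PosDef :=
  PosDef.posSemidef_add hA (PosDef.one.smul hlam)

variable [Fintype ι] [Fintype n] [Fintype p]

theorem PosSemidef.exists_eq_transpose_mul_self [DecidableEq n] {W : Matrix n n ℝ}
    (hW : W.PosSemidef) :
    ∃ B : Matrix n n ℝ, W = Bᵀ * B :=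
  ⟨CFC.sqrt W, by
    rw [← conjTranspose_eq_transpose_of_trivial, ← star_eq_conjTranspose,
      (CFC.sqrt_nonneg W).isSelfAdjoint.star_eq, CFC.sqrt_mul_sqrt_self W hW.nonneg]⟩

theorem norm_eq_sqrt_trace_transpose_mul_self (A : Matrix ι p ℝ) :
    ‖A‖ = √(trace (Aᵀ * A)) := by
  rw [frobenius_norm_def, Real.sqrt_eq_rpow, trace, Finset.sum_comm]
  simp [mul_apply, Real.norm_eq_abs, sq]

theorem frob_eq_norm {m d : ℕ} (A : Matrix (Fin m) (Fin d) ℝ) : frob A = ‖A‖ := by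
  rw [frob, frobenius_norm_def, Real.sqrt_eq_rpow]
  simp [Real.norm_eq_abs]

noncomputable def weightedFrobNorm (W : Matrix n n ℝ) (X : Matrix n p ℝ) : ℝ :=
  √(trace (Xᵀ * W * X))

theorem weightedFrobNorm_eq_norm_mul {W B : Matrix n n ℝ} (hW : W = Bᵀ * B) (X : Matrix n p ℝ) :
    weightedFrobNorm W X = ‖B * X‖ := by
  rw [weightedFrobNorm, norm_eq_sqrt_trace_transpose_mul_self, hW, transpose_mul,
    Matrix.mul_assoc, Matrix.mul_assoc, Matrix.mul_assoc]

theorem weightedFrobNorm_one [DecidableEq n] (X : Matrix n p ℝ) : weightedFrobNorm 1 X = ‖X‖ := by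
  rw [weightedFrobNorm_eq_norm_mul (B := 1) (by simp), Matrix.one_mul]

theorem weightedFrobNorm_add_le [DecidableEq n] {W : Matrix n n ℝ} (hW : W.PosSemidef)
    (X Y : Matrix n p ℝ) :
    weightedFrobNorm W (X + Y) ≤ weightedFrobNorm W X + weightedFrobNorm W Y := by
  obtain ⟨B, rfl⟩ := hW.exists_eq_transpose_mul_self
  simp only [weightedFrobNorm_eq_norm_mul rfl, Matrix.mul_add]
  exact norm_add_le _ _

theorem weightedFrobNorm_sub_le [DecidableEq n] {W : Matrix n n ℝ} (hW : W.PosSemidef)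
    (X Y : Matrix n p ℝ) :
    weightedFrobNorm W (X - Y) ≤ weightedFrobNorm W X + weightedFrobNorm W Y := by
  obtain ⟨B, rfl⟩ := hW.exists_eq_transpose_mul_self
  simp only [weightedFrobNorm_eq_norm_mul rfl, Matrix.mul_sub]
  exact norm_sub_le _ _

theorem weightedFrobNorm_smul (W : Matrix n n ℝ) (c : ℝ) (X : Matrix n p ℝ) :
    weightedFrobNorm W (c • X) = |c| * weightedFrobNorm W X := by
  rw [weightedFrobNorm, weightedFrobNorm, ← Real.sqrt_sq_eq_abs, ← Real.sqrt_mul (sq_nonneg c)]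
  simp only [transpose_smul, Matrix.smul_mul, Matrix.mul_smul, smul_smul, trace_smul,
    smul_eq_mul, sq]

theorem weightedFrobNorm_smul_left (W : Matrix n n ℝ) {c : ℝ} (hc : 0 ≤ c) (X : Matrix n p ℝ) :
    weightedFrobNorm (c • W) X = √c * weightedFrobNorm W X := by
  rw [weightedFrobNorm, weightedFrobNorm, ← Real.sqrt_mul hc]
  simp only [Matrix.mul_smul, Matrix.smul_mul, trace_smul, smul_eq_mul]

theorem weightedFrobNorm_mono {W₁ W₂ : Matrix n n ℝ} (h : W₁ ≤ W₂) (X : Matrix n p ℝ) :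
    weightedFrobNorm W₁ X ≤ weightedFrobNorm W₂ X := by
  have hX := ((le_iff.mp h).conjTranspose_mul_mul_same X).trace_nonneg
  rw [conjTranspose_eq_transpose_of_trivial, Matrix.mul_sub, Matrix.sub_mul, trace_sub] at hX
  exact Real.sqrt_le_sqrt (sub_nonneg.mp hX)

theorem weightedFrobNorm_inv_mul [DecidableEq n] {V : Matrix n n ℝ} (hV : V.PosDef)
    (C : Matrix n p ℝ) :
    weightedFrobNorm V (V⁻¹ * C) = weightedFrobNorm V⁻¹ C := by
  have hVt : V⁻¹ᵀ = V⁻¹ := by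
    rw [← conjTranspose_eq_transpose_of_trivial]; exact hV.inv.isHermitian
  rw [weightedFrobNorm, weightedFrobNorm, transpose_mul, hVt, Matrix.mul_assoc,
    Matrix.mul_assoc, mul_nonsing_inv_cancel_left _ _ hV.det_pos.ne'.isUnit, Matrix.mul_assoc]

theorem PosSemidef.smul_inv_add_smul_one_le_one [DecidableEq n] {A : Matrix n n ℝ}
    (hA : A.PosSemidef) {lam : ℝ} (hlam : 0 < lam) : lam • (A + lam • 1)⁻¹ ≤ 1 := by
  set S := A + lam • (1 : Matrix n n ℝ)
  have hS : S.PosDef := hA.posDef_add_smul_one hlam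
  have hSdet : IsUnit S.det := hS.det_pos.ne'.isUnit
  have hAS : (A * S).PosSemidef := by
    rw [Matrix.mul_add, Matrix.mul_smul, Matrix.mul_one]
    refine PosSemidef.add ?_ (hA.smul hlam.le)
    simpa only [hA.isHermitian.eq] using posSemidef_conjTranspose_mul_self A
  -- `1 - λ S⁻¹ = S⁻¹ A`, which is congruent to `A S = A² + λ A` through `S⁻¹`
  have hcongr : 1 - lam • S⁻¹ = S⁻¹ᴴ * (A * S) * S⁻¹ := by
    have hA_eq : A = S - lam • 1 := (add_sub_cancel_right A _).symm
    rw [hS.inv.isHermitian.eq, Matrix.mul_assoc, Matrix.mul_assoc, mul_nonsing_inv _ hSdet,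
      Matrix.mul_one, hA_eq, Matrix.mul_sub, nonsing_inv_mul _ hSdet, Matrix.mul_smul,
      Matrix.mul_one]
  rw [le_iff, hcongr]
  exact hAS.conjTranspose_mul_mul_same _

end Matrix

theorem ridge_estimator_sub_transpose {ι n p : Type*} [Fintype ι] [Fintype n] [DecidableEq n]
    {Φ : Matrix ι n ℝ} {lam : ℝ} (hV : IsUnit (Φᵀ * Φ + lam • 1).det)
    {M Mhat : Matrix p n ℝ} {E : Matrix ι p ℝ}
    (hMhat : Mhatᵀ = (Φᵀ * Φ + lam • 1)⁻¹ * (Φᵀ * (Φ * Mᵀ + E))) :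
    (Mhat - M)ᵀ = (Φᵀ * Φ + lam • 1)⁻¹ * (Φᵀ * E - lam • Mᵀ) := by
  have hfit : Φᵀ * (Φ * Mᵀ + E) = (Φᵀ * Φ + lam • 1) * Mᵀ + (Φᵀ * E - lam • Mᵀ) := by
    simp only [Matrix.mul_add, Matrix.add_mul, Matrix.mul_assoc, Matrix.smul_mul, Matrix.one_mul]
    abel
  rw [transpose_sub, hMhat, hfit, Matrix.mul_add, nonsing_inv_mul_cancel_left _ _ hV,
    add_sub_cancel_left]

/-- Ridge regression error decomposition: if `Y = Φ Mᵀ + E + N` and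
`M̂ᵀ = (ΦᵀΦ + λI)⁻¹ Φᵀ Y`, then with `V = ΦᵀΦ + λI`,
`√Tr((M̂−M) V (M̂−M)ᵀ) ≤ √Tr(EᵀΦ V⁻¹ Φᵀ E) + √Tr(NᵀΦ V⁻¹ Φᵀ N) + √λ ‖M‖_F`. -/
theorem ridge_error_decomposition {Nn m d : ℕ}
    (Y E Nb : Matrix (Fin Nn) (Fin m) ℝ) (Φ : Matrix (Fin Nn) (Fin d) ℝ)
    (M Mhat : Matrix (Fin m) (Fin d) ℝ) (lam : ℝ) (hlam : 0 < lam)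
    (hmodel : Y = Φ * Mᵀ + E + Nb)
    (hMhat : Mhatᵀ = (Φᵀ * Φ + lam • (1 : Matrix (Fin d) (Fin d) ℝ))⁻¹ * (Φᵀ * Y)) :
    Real.sqrt (Matrix.trace ((Mhat - M) *
        (Φᵀ * Φ + lam • (1 : Matrix (Fin d) (Fin d) ℝ)) * (Mhat - M)ᵀ)) ≤
      Real.sqrt (Matrix.trace
        (Eᵀ * Φ * (Φᵀ * Φ + lam • (1 : Matrix (Fin d) (Fin d) ℝ))⁻¹ * (Φᵀ * E))) +
      Real.sqrt (Matrix.trace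
        (Nbᵀ * Φ * (Φᵀ * Φ + lam • (1 : Matrix (Fin d) (Fin d) ℝ))⁻¹ * (Φᵀ * Nb))) +
      Real.sqrt lam * frob M := by
  set V := Φᵀ * Φ + lam • (1 : Matrix (Fin d) (Fin d) ℝ)
  have hΦ : (Φᵀ * Φ).PosSemidef := by simpa using posSemidef_conjTranspose_mul_self Φ
  have hV : V.PosDef := hΦ.posDef_add_smul_one hlam
  have herr : (Mhat - M)ᵀ = V⁻¹ * (Φᵀ * E + Φᵀ * Nb - lam • Mᵀ) := by
    rw [← Matrix.mul_add]
    refine ridge_estimator_sub_transpose hV.det_pos.ne'.isUnit ?_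
    rw [hMhat, hmodel, add_assoc]
  have hbias : weightedFrobNorm V⁻¹ (lam • Mᵀ) ≤ √lam * frob M :=
    calc weightedFrobNorm V⁻¹ (lam • Mᵀ) = √lam * weightedFrobNorm (lam • V⁻¹) Mᵀ := by
          rw [weightedFrobNorm_smul, weightedFrobNorm_smul_left _ hlam.le, abs_of_pos hlam,
            ← mul_assoc, Real.mul_self_sqrt hlam.le]
      _ ≤ √lam * weightedFrobNorm 1 Mᵀ := by
          gcongr
          exact weightedFrobNorm_mono (hΦ.smul_inv_add_smul_one_le_one hlam) _
      _ = √lam * frob M := by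
          rw [weightedFrobNorm_one, frobenius_norm_transpose, frob_eq_norm]
  have hVinv : V⁻¹.PosSemidef := hV.inv.posSemidef
  calc √(trace ((Mhat - M) * V * (Mhat - M)ᵀ))
      = weightedFrobNorm V⁻¹ (Φᵀ * E + Φᵀ * Nb - lam • Mᵀ) := by
        rw [← weightedFrobNorm_inv_mul hV, ← herr, weightedFrobNorm, transpose_transpose]
    _ ≤ weightedFrobNorm V⁻¹ (Φᵀ * E) + weightedFrobNorm V⁻¹ (Φᵀ * Nb) +
          weightedFrobNorm V⁻¹ (lam • Mᵀ) :=
        (weightedFrobNorm_sub_le hVinv _ _).trans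
          (add_le_add_left (weightedFrobNorm_add_le hVinv _ _) _)
    _ ≤ _ := by
        rw [weightedFrobNorm, weightedFrobNorm, transpose_mul, transpose_mul, transpose_transpose]
        gcongr
end

section
/- Let A, Â ∈ ℝ^{p×q} both have rank n, with σ_n(A) > 0 and σ_n(Â) ≥ σ_n(A)/2. Then ‖Â† − A†‖_F ≤ ‖Â − A‖_F · max{‖A†‖², ‖Â†‖²} ≤ (4/σ_n(A)²)·‖Â − A‖_F, where † denotes the Moore–Penrose pseudoinverse. -/
/-!
Write `E = Â - A` and let `P = A A†`, `Q = A† A`, `P̂ = Â Â†`, `Q̂ = Â† Â` be the orthogonal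
projections attached to the two pseudoinverses. Cut `Â† - A†` into four blocks by `Q̂` on the
left and `P` on the right. The block `(1 - Q̂)(Â† - A†)(1 - P)` vanishes, and the other three are
`-Â† (P̂ E Q) A†`, `Â† ((1 - P) E Q̂ Â†)ᵀ` and `(A† (P E (1 - Q̂)))ᵀ A†`. So each is at most
`m = max(‖A†‖², ‖Â†‖²)` times the Frobenius norm of a block of `E`. Exchanging `A` and `Â` gives a
second such estimate. Between them the two estimates use all six nonzero blocks of the two block
decompositions of `E` (by `P, Q̂` and by `P̂, Q`), so averaging them gives `‖Â† - A†‖_F ≤ m ‖E‖_F`.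
The second inequality follows from `‖A†‖ ≤ 1/σ_n(A)`: `A` maps every `n`-dimensional subspace on
which it is bounded below onto its range. In the lemmas, `Â`, `A†` and `Â†` are written `B`,
`Ad` and `Bd`.
-/

open Matrix

/-- Euclidean norm of a finite-dimensional real vector. -/
noncomputable def vnorm {ι : Type*} [Fintype ι] (x : ι → ℝ) : ℝ :=
  Real.sqrt (∑ i, x i ^ 2)

/-- Spectral (operator) norm of a real matrix. -/
noncomputable def spec {m n : ℕ} (A : Matrix (Fin m) (Fin n) ℝ) : ℝ :=
  sSup {c : ℝ | ∃ x : Fin n → ℝ, vnorm x = 1 ∧ c = vnorm (A.mulVec x)}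

/-- `k`-th largest singular value of a matrix, via the Courant–Fischer
max-min characterization. -/
noncomputable def singularValue {p q : ℕ} (A : Matrix (Fin p) (Fin q) ℝ) (k : ℕ) : ℝ :=
  sSup {c : ℝ | ∃ V : Submodule ℝ (Fin q → ℝ), Module.finrank ℝ V = k ∧
    ∀ x ∈ V, c * vnorm x ≤ vnorm (A.mulVec x)}

/-- `B` is the Moore–Penrose pseudoinverse of `A` (the four Penrose equations). -/
def IsMoorePenrose {p q : ℕ} (A : Matrix (Fin p) (Fin q) ℝ)
    (B : Matrix (Fin q) (Fin p) ℝ) : Prop :=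
  A * B * A = A ∧ B * A * B = B ∧ (A * B)ᵀ = A * B ∧ (B * A)ᵀ = B * A

section vnorm

variable {ι : Type*} [Fintype ι]

lemma vnorm_nonneg (x : ι → ℝ) : 0 ≤ vnorm x :=
  Real.sqrt_nonneg _

lemma vnorm_sq (x : ι → ℝ) : vnorm x ^ 2 = ∑ i, x i ^ 2 :=
  Real.sq_sqrt (by positivity)

lemma vnorm_sq_eq_dotProduct (x : ι → ℝ) : vnorm x ^ 2 = x ⬝ᵥ x := by
  rw [vnorm_sq]
  simp only [dotProduct, sq]

lemma vnorm_smul (c : ℝ) (x : ι → ℝ) : vnorm (c • x) = |c| * vnorm x := by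
  simp only [vnorm, Pi.smul_apply, smul_eq_mul, mul_pow, ← Finset.mul_sum]
  rw [Real.sqrt_mul (sq_nonneg c), Real.sqrt_sq_eq_abs]

lemma vnorm_eq_zero {x : ι → ℝ} : vnorm x = 0 ↔ x = 0 := by
  rw [← sq_eq_zero_iff (a := vnorm x), vnorm_sq, Finset.sum_eq_zero_iff_of_nonneg
    (fun i _ => sq_nonneg (x i)), funext_iff]
  simp

lemma dotProduct_le_vnorm_mul_vnorm (x y : ι → ℝ) : x ⬝ᵥ y ≤ vnorm x * vnorm y := by
  refine le_of_abs_le ((sq_le_sq₀ (abs_nonneg _)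
    (mul_nonneg (vnorm_nonneg x) (vnorm_nonneg y))).1 ?_)
  rw [sq_abs, mul_pow, vnorm_sq, vnorm_sq]
  exact Finset.sum_mul_sq_le_sq_mul_sq _ x y

end vnorm

section norms

variable {m n k : ℕ}

lemma frob_nonneg (M : Matrix (Fin m) (Fin n) ℝ) : 0 ≤ frob M :=
  Real.sqrt_nonneg _

lemma frob_sq (M : Matrix (Fin m) (Fin n) ℝ) : frob M ^ 2 = ∑ i, ∑ j, M i j ^ 2 :=
  Real.sq_sqrt (by positivity)

lemma frob_transpose (M : Matrix (Fin m) (Fin n) ℝ) : frob Mᵀ = frob M := by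
  rw [frob, frob, Finset.sum_comm]
  rfl

lemma frob_zero : frob (0 : Matrix (Fin m) (Fin n) ℝ) = 0 := by
  simp [frob]

lemma frob_neg (M : Matrix (Fin m) (Fin n) ℝ) : frob (-M) = frob M := by
  simp [frob]

lemma frob_sq_eq_sum_vnorm_sq (M : Matrix (Fin m) (Fin n) ℝ) :
    frob M ^ 2 = ∑ j, vnorm (Mᵀ j) ^ 2 := by
  simp only [← frob_transpose M, frob_sq, vnorm_sq, transpose_apply]

lemma vnorm_mulVec_le_frob_mul (M : Matrix (Fin m) (Fin n) ℝ) (x : Fin n → ℝ) :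
    vnorm (M *ᵥ x) ≤ frob M * vnorm x := by
  refine (sq_le_sq₀ (vnorm_nonneg _) (mul_nonneg (frob_nonneg M) (vnorm_nonneg x))).1 ?_
  rw [mul_pow, frob_sq, vnorm_sq, vnorm_sq, Finset.sum_mul]
  exact Finset.sum_le_sum fun i _ => by
    simpa [mulVec, dotProduct] using Finset.sum_mul_sq_le_sq_mul_sq _ (M i) x

lemma spec_nonneg (M : Matrix (Fin m) (Fin n) ℝ) : 0 ≤ spec M :=
  Real.sSup_nonneg (by rintro _ ⟨x, -, rfl⟩; exact vnorm_nonneg _)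

lemma spec_le_of_forall {M : Matrix (Fin m) (Fin n) ℝ} {K : ℝ} (hK : 0 ≤ K)
    (h : ∀ x, vnorm (M *ᵥ x) ≤ K * vnorm x) : spec M ≤ K :=
  Real.sSup_le (by rintro _ ⟨x, hx, rfl⟩; simpa [hx] using h x) hK

lemma vnorm_mulVec_le_spec_mul (M : Matrix (Fin m) (Fin n) ℝ) (x : Fin n → ℝ) :
    vnorm (M *ᵥ x) ≤ spec M * vnorm x := by
  obtain hx | hx := (vnorm_nonneg x).eq_or_lt
  · simp [vnorm_eq_zero.1 hx.symm, vnorm_eq_zero.2]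
  have hbdd : BddAbove {c : ℝ | ∃ x : Fin n → ℝ, vnorm x = 1 ∧ c = vnorm (M *ᵥ x)} :=
    ⟨frob M, by rintro _ ⟨y, hy, rfl⟩; simpa [hy] using vnorm_mulVec_le_frob_mul M y⟩
  have hunit : vnorm ((vnorm x)⁻¹ • x) = 1 := by
    rw [vnorm_smul, abs_of_pos (inv_pos.2 hx), inv_mul_cancel₀ hx.ne']
  have := le_csSup hbdd ⟨_, hunit, rfl⟩
  rw [mulVec_smul, vnorm_smul, abs_of_pos (inv_pos.2 hx), inv_mul_le_iff₀ hx, mul_comm] at this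
  exact this

lemma spec_transpose_le (M : Matrix (Fin m) (Fin n) ℝ) : spec Mᵀ ≤ spec M := by
  refine spec_le_of_forall (spec_nonneg M) fun y => ?_
  have h : vnorm (Mᵀ *ᵥ y) ^ 2 ≤ spec M * vnorm y * vnorm (Mᵀ *ᵥ y) :=
    calc vnorm (Mᵀ *ᵥ y) ^ 2 = y ⬝ᵥ (M *ᵥ (Mᵀ *ᵥ y)) := by
          rw [vnorm_sq_eq_dotProduct, mulVec_transpose, dotProduct_mulVec]
      _ ≤ vnorm y * (spec M * vnorm (Mᵀ *ᵥ y)) :=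
          (dotProduct_le_vnorm_mul_vnorm _ _).trans
            (mul_le_mul_of_nonneg_left (vnorm_mulVec_le_spec_mul M _) (vnorm_nonneg y))
      _ = spec M * vnorm y * vnorm (Mᵀ *ᵥ y) := by ring
  nlinarith [vnorm_nonneg (Mᵀ *ᵥ y), mul_nonneg (spec_nonneg M) (vnorm_nonneg y)]

lemma frob_mul_le_spec_mul (M : Matrix (Fin m) (Fin n) ℝ) (X : Matrix (Fin n) (Fin k) ℝ) :
    frob (M * X) ≤ spec M * frob X := by
  refine (sq_le_sq₀ (frob_nonneg _) (mul_nonneg (spec_nonneg M) (frob_nonneg X))).1 ?_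
  rw [mul_pow, frob_sq_eq_sum_vnorm_sq, frob_sq_eq_sum_vnorm_sq, Finset.mul_sum]
  refine Finset.sum_le_sum fun j _ => ?_
  have hcol : (M * X)ᵀ j = M *ᵥ Xᵀ j := by
    ext i; simp [mul_apply, mulVec, dotProduct]
  rw [hcol, ← mul_pow]
  exact pow_le_pow_left₀ (vnorm_nonneg _) (vnorm_mulVec_le_spec_mul M _) 2

lemma frob_mul_le_frob_mul_spec (X : Matrix (Fin m) (Fin n) ℝ) (M : Matrix (Fin n) (Fin k) ℝ) :
    frob (X * M) ≤ frob X * spec M := by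
  rw [← frob_transpose, transpose_mul, ← frob_transpose X, mul_comm]
  exact (frob_mul_le_spec_mul _ _).trans
    (mul_le_mul_of_nonneg_right (spec_transpose_le M) (frob_nonneg _))

end norms

section projection

variable {m n : ℕ} {P : Matrix (Fin m) (Fin m) ℝ}

lemma IsStarProjection.transpose_eq (hP : IsStarProjection P) : Pᵀ = P := by
  rw [← conjTranspose_eq_transpose_of_trivial, ← star_eq_conjTranspose]
  exact hP.isSelfAdjoint

lemma IsStarProjection.vnorm_mulVec_le (hP : IsStarProjection P) (v : Fin m → ℝ) :
    vnorm (P *ᵥ v) ≤ vnorm v := by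
  have h : vnorm (P *ᵥ v) ^ 2 ≤ vnorm v * vnorm (P *ᵥ v) :=
    calc vnorm (P *ᵥ v) ^ 2 = v ⬝ᵥ (P *ᵥ v) := by
          rw [vnorm_sq_eq_dotProduct, dotProduct_mulVec, ← mulVec_transpose, hP.transpose_eq,
            mulVec_mulVec, hP.isIdempotentElem.eq, dotProduct_comm]
      _ ≤ vnorm v * vnorm (P *ᵥ v) := dotProduct_le_vnorm_mul_vnorm _ _
  nlinarith [vnorm_nonneg (P *ᵥ v), vnorm_nonneg v]

lemma frob_add_sq_of_transpose_mul_eq_zero {X Y : Matrix (Fin m) (Fin n) ℝ} (h : Xᵀ * Y = 0) :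
    frob (X + Y) ^ 2 = frob X ^ 2 + frob Y ^ 2 := by
  have hcross : ∑ i, ∑ j, 2 * X i j * Y i j = 0 := by
    rw [Finset.sum_comm]
    refine Finset.sum_eq_zero fun j _ => ?_
    simpa [mul_apply, mul_assoc, ← Finset.mul_sum] using congrFun₂ h j j
  simp only [frob_sq, Matrix.add_apply, add_sq, Finset.sum_add_distrib, hcross, add_zero]

lemma IsStarProjection.frob_sq_eq_add_left (hP : IsStarProjection P)
    (X : Matrix (Fin m) (Fin n) ℝ) :
    frob X ^ 2 = frob (P * X) ^ 2 + frob ((1 - P) * X) ^ 2 := by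
  have horth : (P * X)ᵀ * ((1 - P) * X) = 0 := by
    rw [transpose_mul, hP.transpose_eq, Matrix.mul_assoc, ← Matrix.mul_assoc P,
      hP.mul_one_sub_self, Matrix.zero_mul, Matrix.mul_zero]
  rw [← frob_add_sq_of_transpose_mul_eq_zero horth, ← Matrix.add_mul, add_sub_cancel,
    Matrix.one_mul]

lemma IsStarProjection.frob_sq_eq_add_right {Q : Matrix (Fin n) (Fin n) ℝ}
    (hQ : IsStarProjection Q) (X : Matrix (Fin m) (Fin n) ℝ) :
    frob X ^ 2 = frob (X * Q) ^ 2 + frob (X * (1 - Q)) ^ 2 := by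
  have h := hQ.frob_sq_eq_add_left Xᵀ
  rw [← frob_transpose (Q * Xᵀ), ← frob_transpose ((1 - Q) * Xᵀ), frob_transpose] at h
  simpa only [transpose_mul, transpose_transpose, transpose_sub, transpose_one,
    hQ.transpose_eq] using h

lemma frob_sq_eq_sum_blocks {Q : Matrix (Fin n) (Fin n) ℝ} (hP : IsStarProjection P)
    (hQ : IsStarProjection Q) (X : Matrix (Fin m) (Fin n) ℝ) :
    frob X ^ 2 = frob (P * X * Q) ^ 2 + frob (P * X * (1 - Q)) ^ 2
      + frob ((1 - P) * X * Q) ^ 2 + frob ((1 - P) * X * (1 - Q)) ^ 2 := by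
  rw [hP.frob_sq_eq_add_left X, hQ.frob_sq_eq_add_right (P * X),
    hQ.frob_sq_eq_add_right ((1 - P) * X)]
  ring

end projection

lemma Submodule.map_eq_range_of_finrank_eq {K V W : Type*} [Field K] [AddCommGroup V]
    [Module K V] [AddCommGroup W] [Module K W] [FiniteDimensional K W] {f : V →ₗ[K] W}
    {U : Submodule K V} (hinj : ∀ x ∈ U, f x = 0 → x = 0)
    (h : Module.finrank K U = Module.finrank K (LinearMap.range f)) :
    U.map f = LinearMap.range f := by
  refine Submodule.eq_of_le_of_finrank_le LinearMap.map_le_range ?_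
  have hinj' : Function.Injective (f ∘ₗ U.subtype) :=
    (injective_iff_map_eq_zero _).2 fun x hx => Subtype.ext (hinj x x.2 hx)
  rw [← h, ← LinearMap.finrank_range_of_inj hinj', LinearMap.range_comp, Submodule.range_subtype]

namespace IsMoorePenrose

variable {p q k n : ℕ} {A B : Matrix (Fin p) (Fin q) ℝ} {Ad Bd : Matrix (Fin q) (Fin p) ℝ}

lemma symm (hA : IsMoorePenrose A Ad) : IsMoorePenrose Ad A :=
  ⟨hA.2.1, hA.1, hA.2.2.2, hA.2.2.1⟩

lemma mul_pinv_mul (hA : IsMoorePenrose A Ad) : A * (Ad * A) = A := by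
  rw [← Matrix.mul_assoc, hA.1]

lemma mul_pinv_mul_mul (hA : IsMoorePenrose A Ad) (X : Matrix (Fin q) (Fin k) ℝ) :
    A * (Ad * (A * X)) = A * X := by
  rw [← Matrix.mul_assoc, ← Matrix.mul_assoc, hA.1]

lemma transpose_pinv_mul_transpose (hA : IsMoorePenrose A Ad) : Adᵀ * Aᵀ = A * Ad := by
  rw [← transpose_mul, hA.2.2.1]

lemma isStarProjection_mul_pinv (hA : IsMoorePenrose A Ad) : IsStarProjection (A * Ad) where
  isIdempotentElem := by rw [IsIdempotentElem, Matrix.mul_assoc, hA.symm.mul_pinv_mul]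
  isSelfAdjoint := by
    rw [IsSelfAdjoint, star_eq_conjTranspose, conjTranspose_eq_transpose_of_trivial]
    exact hA.2.2.1

lemma block₁₁_pinv_sub (hA : IsMoorePenrose A Ad) (hB : IsMoorePenrose B Bd) :
    Bd * B * (Bd - Ad) * (A * Ad) = -(Bd * (B * Bd * (B - A) * (Ad * A)) * Ad) := by
  simp only [Matrix.mul_sub, Matrix.sub_mul, Matrix.mul_assoc, hA.mul_pinv_mul,
    hA.symm.mul_pinv_mul, hB.mul_pinv_mul, hB.symm.mul_pinv_mul, hB.symm.mul_pinv_mul_mul]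
  abel

-- Wedin's trick: `Bd = Bd Bdᵀ Bᵀ`, and `Aᵀ (1 - A Ad) = 0` lets `Bᵀ` be replaced by `(B - A)ᵀ`.
lemma block₁₂_pinv_sub (hA : IsMoorePenrose A Ad) (hB : IsMoorePenrose B Bd) :
    Bd * B * (Bd - Ad) * (1 - A * Ad) = Bd * ((1 - A * Ad) * (B - A) * (Bd * B) * Bd)ᵀ := by
  simp only [transpose_mul, transpose_sub, Matrix.mul_sub, Matrix.sub_mul, Matrix.mul_assoc,
    Matrix.mul_one, Matrix.one_mul, hA.mul_pinv_mul, hA.symm.mul_pinv_mul, hB.mul_pinv_mul,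
    hB.symm.mul_pinv_mul, hB.symm.mul_pinv_mul_mul, hA.transpose_pinv_mul_transpose,
    hB.transpose_pinv_mul_transpose]
  abel

lemma block₂₁_pinv_sub (hA : IsMoorePenrose A Ad) (hB : IsMoorePenrose B Bd) :
    (1 - Bd * B) * (Bd - Ad) * (A * Ad) = (Ad * (A * Ad * (B - A) * (1 - Bd * B)))ᵀ * Ad := by
  simp only [transpose_mul, transpose_sub, Matrix.mul_sub, Matrix.sub_mul, Matrix.mul_assoc,
    Matrix.mul_one, Matrix.one_mul, hA.mul_pinv_mul, hA.symm.mul_pinv_mul,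
    hA.symm.mul_pinv_mul_mul, hB.mul_pinv_mul, hB.symm.mul_pinv_mul,
    hA.symm.transpose_pinv_mul_transpose, hB.symm.transpose_pinv_mul_transpose]
  abel

lemma block₂₂_pinv_sub (hA : IsMoorePenrose A Ad) (hB : IsMoorePenrose B Bd) :
    (1 - Bd * B) * (Bd - Ad) * (1 - A * Ad) = 0 := by
  simp only [Matrix.mul_sub, Matrix.sub_mul, Matrix.mul_assoc, Matrix.mul_one, Matrix.one_mul,
    hA.symm.mul_pinv_mul, hB.symm.mul_pinv_mul]
  abel

lemma block₂₂_sub (hA : IsMoorePenrose A Ad) (hB : IsMoorePenrose B Bd) :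
    (1 - A * Ad) * (B - A) * (1 - Bd * B) = 0 := by
  simp only [Matrix.mul_sub, Matrix.sub_mul, Matrix.mul_assoc, Matrix.mul_one, Matrix.one_mul,
    hA.mul_pinv_mul, hB.mul_pinv_mul]
  abel

lemma frob_block₁₁_pinv_sub_le (hA : IsMoorePenrose A Ad) (hB : IsMoorePenrose B Bd) :
    frob (Bd * B * (Bd - Ad) * (A * Ad)) ≤
      spec Bd * spec Ad * frob (B * Bd * (B - A) * (Ad * A)) :=
  calc frob (Bd * B * (Bd - Ad) * (A * Ad))
      = frob (Bd * (B * Bd * (B - A) * (Ad * A)) * Ad) := by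
        rw [hA.block₁₁_pinv_sub hB, frob_neg]
    _ ≤ spec Bd * frob (B * Bd * (B - A) * (Ad * A)) * spec Ad := by
        grw [frob_mul_le_frob_mul_spec, frob_mul_le_spec_mul]
        exact spec_nonneg _
    _ = spec Bd * spec Ad * frob (B * Bd * (B - A) * (Ad * A)) := by ring

lemma frob_block₁₂_pinv_sub_le (hA : IsMoorePenrose A Ad) (hB : IsMoorePenrose B Bd) :
    frob (Bd * B * (Bd - Ad) * (1 - A * Ad)) ≤
      spec Bd ^ 2 * frob ((1 - A * Ad) * (B - A) * (Bd * B)) :=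
  calc frob (Bd * B * (Bd - Ad) * (1 - A * Ad))
      = frob (Bd * ((1 - A * Ad) * (B - A) * (Bd * B) * Bd)ᵀ) := by
        rw [hA.block₁₂_pinv_sub hB]
    _ ≤ spec Bd * (frob ((1 - A * Ad) * (B - A) * (Bd * B)) * spec Bd) := by
        grw [frob_mul_le_spec_mul, frob_transpose, frob_mul_le_frob_mul_spec]
        exact spec_nonneg _
    _ = spec Bd ^ 2 * frob ((1 - A * Ad) * (B - A) * (Bd * B)) := by ring

lemma frob_block₂₁_pinv_sub_le (hA : IsMoorePenrose A Ad) (hB : IsMoorePenrose B Bd) :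
    frob ((1 - Bd * B) * (Bd - Ad) * (A * Ad)) ≤
      spec Ad ^ 2 * frob (A * Ad * (B - A) * (1 - Bd * B)) :=
  calc frob ((1 - Bd * B) * (Bd - Ad) * (A * Ad))
      = frob ((Ad * (A * Ad * (B - A) * (1 - Bd * B)))ᵀ * Ad) := by
        rw [hA.block₂₁_pinv_sub hB]
    _ ≤ spec Ad * frob (A * Ad * (B - A) * (1 - Bd * B)) * spec Ad := by
        grw [frob_mul_le_frob_mul_spec, frob_transpose, frob_mul_le_spec_mul]
        exact spec_nonneg _
    _ = spec Ad ^ 2 * frob (A * Ad * (B - A) * (1 - Bd * B)) := by ring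

lemma frob_sq_pinv_sub_le (hA : IsMoorePenrose A Ad) (hB : IsMoorePenrose B Bd) {m : ℝ}
    (hAm : spec Ad ^ 2 ≤ m) (hBm : spec Bd ^ 2 ≤ m) :
    frob (Bd - Ad) ^ 2 ≤ m ^ 2 * (frob (B * Bd * (B - A) * (Ad * A)) ^ 2
      + frob ((1 - A * Ad) * (B - A) * (Bd * B)) ^ 2
      + frob (A * Ad * (B - A) * (1 - Bd * B)) ^ 2) := by
  have sq_le {x c y : ℝ} (hx : 0 ≤ x) (hxy : x ≤ c * y) (hc : c ^ 2 ≤ m ^ 2) :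
      x ^ 2 ≤ m ^ 2 * y ^ 2 := by
    grw [hxy, mul_pow, hc]
  have hm : 0 ≤ m := (sq_nonneg _).trans hAm
  rw [frob_sq_eq_sum_blocks hB.symm.isStarProjection_mul_pinv hA.isStarProjection_mul_pinv,
    hA.block₂₂_pinv_sub hB]
  have h₁₁ := sq_le (frob_nonneg _) (hA.frob_block₁₁_pinv_sub_le hB)
    (by rw [mul_pow, sq m]; exact mul_le_mul hBm hAm (sq_nonneg _) hm)
  have h₁₂ := sq_le (frob_nonneg _) (hA.frob_block₁₂_pinv_sub_le hB)
    (pow_le_pow_left₀ (sq_nonneg _) hBm 2)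
  have h₂₁ := sq_le (frob_nonneg _) (hA.frob_block₂₁_pinv_sub_le hB)
    (pow_le_pow_left₀ (sq_nonneg _) hAm 2)
  rw [frob_zero]
  linarith

lemma frob_pinv_sub_le (hA : IsMoorePenrose A Ad) (hB : IsMoorePenrose B Bd) :
    frob (Bd - Ad) ≤ frob (B - A) * max (spec Ad ^ 2) (spec Bd ^ 2) := by
  set m := max (spec Ad ^ 2) (spec Bd ^ 2)
  have h₁ := hA.frob_sq_pinv_sub_le hB (le_max_left _ _) (le_max_right _ _)
  have h₂ := hB.frob_sq_pinv_sub_le hA (le_max_right _ _) (le_max_left _ _)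
  rw [← neg_sub B A, ← neg_sub Bd Ad] at h₂
  simp only [Matrix.mul_neg, Matrix.neg_mul, frob_neg] at h₂
  have e₁ := frob_sq_eq_sum_blocks hA.isStarProjection_mul_pinv
    hB.symm.isStarProjection_mul_pinv (B - A)
  have e₂ := frob_sq_eq_sum_blocks hB.isStarProjection_mul_pinv
    hA.symm.isStarProjection_mul_pinv (B - A)
  have c₂ := hB.block₂₂_sub hA
  rw [← neg_sub B A, Matrix.mul_neg, Matrix.neg_mul, neg_eq_zero] at c₂
  rw [hA.block₂₂_sub hB, frob_zero] at e₁
  rw [c₂, frob_zero] at e₂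
  have hm : 0 ≤ m := (sq_nonneg _).trans (le_max_left _ _)
  refine (sq_le_sq₀ (frob_nonneg _) (mul_nonneg (frob_nonneg _) hm)).1 ?_
  linear_combination (h₁ + h₂) / 2 - m ^ 2 / 2 * (e₁ + e₂)

lemma mul_vnorm_pinv_mulVec_le (hA : IsMoorePenrose A Ad) (hr : A.rank = n) {c : ℝ}
    {V : Submodule ℝ (Fin q → ℝ)} (hV : Module.finrank ℝ V = n)
    (hc : ∀ x ∈ V, c * vnorm x ≤ vnorm (A *ᵥ x)) (x : Fin p → ℝ) :
    c * vnorm (Ad *ᵥ x) ≤ vnorm x := by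
  rcases le_or_gt c 0 with hc0 | hc0
  · exact (mul_nonpos_of_nonpos_of_nonneg hc0 (vnorm_nonneg _)).trans (vnorm_nonneg _)
  have hmap : V.map A.mulVecLin = LinearMap.range A.mulVecLin := by
    refine Submodule.map_eq_range_of_finrank_eq (fun v hv hAv => ?_) (by rw [hV, ← hr]; rfl)
    have hcv := hc v hv
    rw [← mulVecLin_apply, hAv, vnorm_eq_zero.2 rfl] at hcv
    exact vnorm_eq_zero.1 ((nonpos_of_mul_nonpos_right hcv hc0).antisymm (vnorm_nonneg v))
  -- `A Ad x = A v` for some `v ∈ V`, and then `Ad x = Ad A v`.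
  obtain ⟨v, hv, hAv⟩ : A *ᵥ (Ad *ᵥ x) ∈ V.map A.mulVecLin := hmap ▸ ⟨Ad *ᵥ x, rfl⟩
  rw [mulVecLin_apply] at hAv
  have hAdx : Ad *ᵥ x = (Ad * A) *ᵥ v := by
    rw [← mulVec_mulVec, hAv, mulVec_mulVec, mulVec_mulVec, hA.2.1]
  calc c * vnorm (Ad *ᵥ x) ≤ c * vnorm v := by
        rw [hAdx]
        gcongr
        exact hA.symm.isStarProjection_mul_pinv.vnorm_mulVec_le v
    _ ≤ vnorm (A *ᵥ v) := hc v hv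
    _ ≤ vnorm x := by
        rw [hAv, mulVec_mulVec]
        exact hA.isStarProjection_mul_pinv.vnorm_mulVec_le x

lemma singularValue_mul_vnorm_pinv_mulVec_le (hA : IsMoorePenrose A Ad) (hr : A.rank = n)
    (x : Fin p → ℝ) : singularValue A n * vnorm (Ad *ᵥ x) ≤ vnorm x := by
  obtain h0 | hpos := (vnorm_nonneg (Ad *ᵥ x)).eq_or_lt
  · rw [← h0, mul_zero]
    exact vnorm_nonneg x
  rw [← le_div_iff₀ hpos]
  refine Real.sSup_le ?_ (div_nonneg (vnorm_nonneg x) hpos.le)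
  rintro c ⟨V, hV, hc⟩
  exact (le_div_iff₀ hpos).2 (hA.mul_vnorm_pinv_mulVec_le hr hV hc x)

lemma spec_pinv_le (hA : IsMoorePenrose A Ad) (hr : A.rank = n)
    (hσ : 0 < singularValue A n) : spec Ad ≤ (singularValue A n)⁻¹ :=
  spec_le_of_forall (inv_nonneg.2 hσ.le) fun x => by
    rw [inv_mul_eq_div, le_div_iff₀ hσ, mul_comm]
    exact hA.singularValue_mul_vnorm_pinv_mulVec_le hr x

end IsMoorePenrose

/-- Wedin-type pseudoinverse perturbation bound: for rank-`n` matrices `A, Â`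
with `σ_n(A) > 0` and `σ_n(Â) ≥ σ_n(A)/2`,
`‖Â† − A†‖_F ≤ ‖Â − A‖_F · max{‖A†‖², ‖Â†‖²} ≤ (4/σ_n(A)²) ‖Â − A‖_F`. -/
theorem pinv_perturbation {p q n : ℕ} (A Ahat : Matrix (Fin p) (Fin q) ℝ)
    (Ad Ahatd : Matrix (Fin q) (Fin p) ℝ)
    (hA : IsMoorePenrose A Ad) (hAhat : IsMoorePenrose Ahat Ahatd)
    (hrA : A.rank = n) (hrAhat : Ahat.rank = n)
    (hσ : 0 < singularValue A n)
    (hσ2 : singularValue A n / 2 ≤ singularValue Ahat n) :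
    frob (Ahatd - Ad) ≤ frob (Ahat - A) * max (spec Ad ^ 2) (spec Ahatd ^ 2) ∧
      frob (Ahat - A) * max (spec Ad ^ 2) (spec Ahatd ^ 2) ≤
        (4 / singularValue A n ^ 2) * frob (Ahat - A) := by
  refine ⟨hA.frob_pinv_sub_le hAhat, ?_⟩
  have hσhat : 0 < singularValue Ahat n := by linarith
  have hAd : spec Ad ≤ 2 / singularValue A n :=
    (hA.spec_pinv_le hrA hσ).trans (by rw [inv_eq_one_div]; gcongr; norm_num)
  have hAhatd : spec Ahatd ≤ 2 / singularValue A n :=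
    (hAhat.spec_pinv_le hrAhat hσhat).trans
      (by rw [inv_eq_one_div, div_le_div_iff₀ hσhat hσ]; linarith)
  have hmax : max (spec Ad ^ 2) (spec Ahatd ^ 2) ≤ 4 / singularValue A n ^ 2 := by
    rw [show 4 / singularValue A n ^ 2 = (2 / singularValue A n) ^ 2 by ring]
    exact max_le (pow_le_pow_left₀ (spec_nonneg _) hAd 2)
      (pow_le_pow_left₀ (spec_nonneg _) hAhatd 2)
  rw [mul_comm]
  exact mul_le_mul_of_nonneg_right hmax (frob_nonneg _)
end
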